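/- arXiv:1208.6309 — 2 statements merged into one kernel-verified Lean document; each statement's English description precedes it below -/
import Mathlib

section
/- Let f : P → Q be a pure filtration map of finite posets and let Z be a closed subposet of Q. (a) If Z is of pure codimension one in Q, then f⁻¹(Z) is of pure codimension one in P. (b) If Z ⊆ f(P) and f⁻¹(Z) is of pure codimension one in P, then Z is of pure codimension one in Q. -/
/-- `a` is a maximal element of the subposet `A`. -/
def IsMaxIn {P : Type*} [PartialOrder P] (A : Set P) (a : P) : Prop :=
  a ∈ A ∧ ∀ x ∈ A, a ≤ x → x = a

/-- `b` covers `a` within the subposet `A`: `a < b` and no element of `A` lies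
strictly between them. -/
def CoversIn {P : Type*} [PartialOrder P] (A : Set P) (a b : P) : Prop :=
  a ∈ A ∧ b ∈ A ∧ a < b ∧ ∀ x ∈ A, a < x → ¬x < b

/-- The subposet `A` is of codimension one in the subposet `B`: every maximal element
of `A` is covered (within `B`) by a maximal element of `B`. -/
def CodimOneIn {P : Type*} [PartialOrder P] (A B : Set P) : Prop :=
  ∀ a : P, IsMaxIn A a → ∃ b : P, IsMaxIn B b ∧ CoversIn B a b

/-- The subposet `A` is of pure codimension one in the subposet `B`: it is of
codimension one, and no maximal element of `A` is covered by a non-maximal element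
of `B`. -/
def PureCodimOneIn {P : Type*} [PartialOrder P] (A B : Set P) : Prop :=
  CodimOneIn A B ∧ ∀ a : P, IsMaxIn A a → ∀ b : P, CoversIn B a b → IsMaxIn B b

/-- `A` is a closed subposet of the subposet `B`. -/
def IsClosedSubposet {P : Type*} [PartialOrder P] (B A : Set P) : Prop :=
  A ⊆ B ∧ ∀ a ∈ A, ∀ x ∈ B, x ≤ a → x ∈ A

/-- A (sub)poset is constructible if either it has a greatest element, or it is a union
`Q ∪ R` of closed subposets such that `Q ∩ R` is of codimension one both in `Q` and in
`R`, and each of `Q`, `R` and `Q ∩ R` is constructible. -/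
inductive PosetConstructible {P : Type*} [PartialOrder P] : Set P → Prop where
  | cone {A : Set P} {g : P} (hg : g ∈ A) (hgreatest : ∀ x ∈ A, x ≤ g) :
      PosetConstructible A
  | step {Q R : Set P} (hQ : IsClosedSubposet (Q ∪ R) Q) (hR : IsClosedSubposet (Q ∪ R) R)
      (hcQ : CodimOneIn (Q ∩ R) Q) (hcR : CodimOneIn (Q ∩ R) R)
      (cQ : PosetConstructible Q) (cR : PosetConstructible R)
      (cQR : PosetConstructible (Q ∩ R)) : PosetConstructible (Q ∪ R)

/-- A monotone map `f : P → Q` is a filtration map if `f⁻¹(⌊q⌋ \ {q})` is of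
codimension one in `f⁻¹(⌊q⌋)` for every `q`. -/
def IsFiltrationMap {P Q : Type*} [PartialOrder P] [PartialOrder Q] (f : P → Q) : Prop :=
  ∀ q : Q, CodimOneIn (f ⁻¹' {y | y < q}) (f ⁻¹' {y | y ≤ q})

/-- A monotone map `f : P → Q` is a pure filtration map if `f⁻¹(⌊q⌋ \ {q})` is of
pure codimension one in `f⁻¹(⌊q⌋)` for every `q`. -/
def IsPureFiltrationMap {P Q : Type*} [PartialOrder P] [PartialOrder Q] (f : P → Q) :
    Prop :=
  ∀ q : Q, PureCodimOneIn (f ⁻¹' {y | y < q}) (f ⁻¹' {y | y ≤ q})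

/-- A monotone map is constructible if it is a filtration map and every `f⁻¹(⌊q⌋)` is
constructible. -/
def IsConstructibleMap {P Q : Type*} [PartialOrder P] [PartialOrder Q] (f : P → Q) :
    Prop :=
  IsFiltrationMap f ∧ ∀ q : Q, PosetConstructible (f ⁻¹' {y | y ≤ q})

/-! Let `a` be maximal in `f⁻¹(Z)`. For a filtration map, `f a` is then maximal in `Z`
(otherwise the filtration condition at some `r > f a` in `Z` would move `a` up inside
`f⁻¹(Z)`), and for every cover `s` of `f a`, `a` is maximal in `f⁻¹(⌊s⌋ \ {s})`, so it has a
cover `c` with `f c ≤ s`.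

(a) Purity of `Z` makes everything above `f a` a maximal cover of `f a`; purity of `f` at
`f b` then makes every cover `b` of `a` maximal in `P`.

(b) Purity of `f⁻¹(Z)` makes `c` maximal in `P`; filtration maps preserve maximal elements,
so `s = f c` is maximal in `Q`. -/

open Set

section Poset

variable {P : Type*} [PartialOrder P]

theorem isMaxIn_iff_maximal {S : Set P} {a : P} : IsMaxIn S a ↔ Maximal (· ∈ S) a :=
  and_congr_right fun _ => forall₂_congr fun _ _ =>
    ⟨fun h hax => (h hax).le, fun h hax => le_antisymm (h hax) hax⟩

theorem coversIn_univ_iff {a b : P} : CoversIn univ a b ↔ a ⋖ b := by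
  simp [CoversIn, CovBy]

theorem exists_isMaxIn_ge [Finite P] {S : Set P} {p : P} (hp : p ∈ S) :
    ∃ a, p ≤ a ∧ IsMaxIn S a := by
  simpa only [isMaxIn_iff_maximal] using S.toFinite.exists_le_maximal hp

theorem exists_coversIn_univ_le [Finite P] {a b : P} (hab : a < b) :
    ∃ c, c ≤ b ∧ CoversIn univ a c := by
  obtain ⟨c, hac, hcb⟩ := exists_covBy_le_of_lt hab
  exact ⟨c, hcb, coversIn_univ_iff.2 hac⟩

theorem CoversIn.of_univ {B : Set P} {a b : P} (h : CoversIn univ a b) (ha : a ∈ B)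
    (hb : b ∈ B) : CoversIn B a b :=
  ⟨ha, hb, h.2.2.1, fun x _ => h.2.2.2 x trivial⟩

theorem CoversIn.univ_of_isLowerSet {B : Set P} {a b : P} (hB : IsLowerSet B)
    (h : CoversIn B a b) : CoversIn univ a b :=
  ⟨trivial, trivial, h.2.2.1, fun x _ hax hxb => h.2.2.2 x (hB hxb.le h.2.1) hax hxb⟩

theorem isClosedSubposet_univ_iff {Z : Set P} : IsClosedSubposet univ Z ↔ IsLowerSet Z :=
  ⟨fun h _ _ hxy hy => h.2 _ hy _ trivial hxy,
    fun h => ⟨subset_univ Z, fun _ ha _ _ hxa => h hxa ha⟩⟩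

theorem PureCodimOneIn.coversIn_of_lt [Finite P] {Z : Set P} (hZ : PureCodimOneIn Z univ)
    {q t : P} (hq : IsMaxIn Z q) (hqt : q < t) : CoversIn univ q t := by
  obtain ⟨s, hst, hqs⟩ := exists_coversIn_univ_le hqt
  rwa [(hZ.2 q hq s hqs).2 t trivial hst]

end Poset

section FiltrationMap

variable {P Q : Type*} [PartialOrder P] [PartialOrder Q] {f : P → Q}

theorem IsPureFiltrationMap.isFiltrationMap (hfil : IsPureFiltrationMap f) :
    IsFiltrationMap f :=
  fun q => (hfil q).1

theorem IsFiltrationMap.isMaxIn_image (hfil : IsFiltrationMap f) {Z : Set Q}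
    (hZ : IsLowerSet Z) {a : P} (ha : IsMaxIn (f ⁻¹' Z) a) : IsMaxIn Z (f a) := by
  refine ⟨ha.1, fun r hr har => by_contra fun hne => ?_⟩
  have hlt : f a < r := lt_of_le_of_ne har (Ne.symm hne)
  obtain ⟨b, -, hab⟩ := hfil r a ⟨hlt, fun x hx => ha.2 x (hZ (le_of_lt hx) hr)⟩
  exact hab.2.2.1.ne' (ha.2 b (hZ hab.2.1 hr) hab.2.2.1.le)

theorem IsFiltrationMap.isMaxIn_univ_image (hfil : IsFiltrationMap f) {p : P}
    (hp : IsMaxIn univ p) : IsMaxIn univ (f p) :=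
  hfil.isMaxIn_image isLowerSet_univ hp

theorem image_lt_image_of_isMaxIn_preimage (hf : Monotone f) {Z : Set Q} {a b : P}
    (ha : IsMaxIn (f ⁻¹' Z) a) (hab : a < b) : f a < f b := by
  have hb : f b ∉ Z := fun h => hab.ne' (ha.2 b h hab.le)
  exact (hf hab.le).lt_of_ne fun h => hb (h ▸ ha.1)

theorem isMaxIn_preimage_lt_of_coversIn (hf : Monotone f) {Z : Set Q} {a : P}
    (ha : IsMaxIn (f ⁻¹' Z) a) {s : Q} (hs : CoversIn univ (f a) s) :
    IsMaxIn (f ⁻¹' {y | y < s}) a := by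
  refine ⟨hs.2.2.1, fun x hx hax => ha.2 x ?_ hax⟩
  obtain hfx | hfx := (hf hax).eq_or_lt
  · exact show f x ∈ Z from hfx ▸ ha.1
  · exact absurd hx (hs.2.2.2 (f x) trivial hfx)

end FiltrationMap

section Amalgamation

variable {P Q : Type*} [PartialOrder P] [PartialOrder Q] {f : P → Q} {Z : Set Q}

theorem IsPureFiltrationMap.isMaxIn_univ_of_coversIn [Finite Q] (hf : Monotone f)
    (hfil : IsPureFiltrationMap f) (hZ : IsLowerSet Z) (hZp : PureCodimOneIn Z univ) {a b : P}
    (ha : IsMaxIn (f ⁻¹' Z) a) (hab : CoversIn univ a b) : IsMaxIn univ b := by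
  have hfa : IsMaxIn Z (f a) := hfil.isFiltrationMap.isMaxIn_image hZ ha
  have hcov : CoversIn univ (f a) (f b) :=
    hZp.coversIn_of_lt hfa (image_lt_image_of_isMaxIn_preimage hf ha hab.2.2.1)
  have hfb : IsMaxIn univ (f b) := hZp.2 _ hfa _ hcov
  have hb : IsMaxIn (f ⁻¹' {y | y ≤ f b}) b :=
    (hfil (f b)).2 a (isMaxIn_preimage_lt_of_coversIn hf ha hcov) b
      (hab.of_univ hcov.2.2.1.le le_rfl)
  exact ⟨trivial, fun x _ hbx => hb.2 x (hfb.2 (f x) trivial (hf hbx)).le hbx⟩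

theorem IsPureFiltrationMap.pureCodimOneIn_preimage [Finite P] [Finite Q] (hf : Monotone f)
    (hfil : IsPureFiltrationMap f) (hZ : IsLowerSet Z) (hZp : PureCodimOneIn Z univ) :
    PureCodimOneIn (f ⁻¹' Z) univ := by
  refine ⟨fun a ha => ?_, fun a ha b hab => hfil.isMaxIn_univ_of_coversIn hf hZ hZp ha hab⟩
  obtain ⟨s, -, hs⟩ := hZp.1 (f a) (hfil.isFiltrationMap.isMaxIn_image hZ ha)
  obtain ⟨c, -, hac⟩ := (hfil s).1 a (isMaxIn_preimage_lt_of_coversIn hf ha hs)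
  obtain ⟨b, -, hab⟩ := exists_coversIn_univ_le hac.2.2.1
  exact ⟨b, hfil.isMaxIn_univ_of_coversIn hf hZ hZp ha hab, hab⟩

theorem exists_isMaxIn_preimage_of_subset_range [Finite P] (hf : Monotone f)
    (hZr : Z ⊆ range f) {q : Q} (hq : IsMaxIn Z q) : ∃ a, f a = q ∧ IsMaxIn (f ⁻¹' Z) a := by
  obtain ⟨p, rfl⟩ := hZr hq.1
  obtain ⟨a, hpa, ha⟩ := exists_isMaxIn_ge (show p ∈ f ⁻¹' Z from hq.1)
  exact ⟨a, hq.2 (f a) ha.1 (hf hpa), ha⟩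

theorem IsFiltrationMap.isMaxIn_univ_of_coversIn_image (hf : Monotone f)
    (hfil : IsFiltrationMap f) (hpre : PureCodimOneIn (f ⁻¹' Z) univ) {a : P}
    (ha : IsMaxIn (f ⁻¹' Z) a) {s : Q} (hs : CoversIn univ (f a) s) : IsMaxIn univ s := by
  obtain ⟨c, -, hac⟩ := hfil s a (isMaxIn_preimage_lt_of_coversIn hf ha hs)
  have hc : IsMaxIn univ c :=
    hpre.2 a ha c (hac.univ_of_isLowerSet ((isLowerSet_Iic s).preimage hf))
  have hfc : IsMaxIn univ (f c) := hfil.isMaxIn_univ_image hc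
  rwa [hfc.2 s trivial hac.2.1]

theorem IsFiltrationMap.pureCodimOneIn_of_preimage [Finite P] [Finite Q] (hf : Monotone f)
    (hfil : IsFiltrationMap f) (hZr : Z ⊆ range f) (hpre : PureCodimOneIn (f ⁻¹' Z) univ) :
    PureCodimOneIn Z univ := by
  refine ⟨fun q hq => ?_, fun q hq s hs => ?_⟩
  · obtain ⟨a, rfl, ha⟩ := exists_isMaxIn_preimage_of_subset_range hf hZr hq
    obtain ⟨b, -, hab⟩ := hpre.1 a ha
    obtain ⟨s, -, hs⟩ :=
      exists_coversIn_univ_le (image_lt_image_of_isMaxIn_preimage hf ha hab.2.2.1)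
    exact ⟨s, hfil.isMaxIn_univ_of_coversIn_image hf hpre ha hs, hs⟩
  · obtain ⟨a, rfl, ha⟩ := exists_isMaxIn_preimage_of_subset_range hf hZr hq
    exact hfil.isMaxIn_univ_of_coversIn_image hf hpre ha hs

end Amalgamation

/-- Let `f : P → Q` be a pure filtration map and `Z` a closed subposet of `Q`.
(a) If `Z` is of pure codimension one in `Q`, then `f⁻¹(Z)` is of pure codimension one
in `P`. (b) If `Z ⊆ f(P)` and `f⁻¹(Z)` is of pure codimension one in `P`, then `Z` is
of pure codimension one in `Q`. -/
theorem pure_filtration_amalgamation {P Q : Type*} [PartialOrder P] [PartialOrder Q]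
    [Finite P] [Finite Q] (f : P → Q) (hf : Monotone f)
    (hfil : IsPureFiltrationMap f) (Z : Set Q) (hZ : IsClosedSubposet Set.univ Z) :
    (PureCodimOneIn Z Set.univ → PureCodimOneIn (f ⁻¹' Z) Set.univ) ∧
    (Z ⊆ Set.range f → PureCodimOneIn (f ⁻¹' Z) Set.univ →
      PureCodimOneIn Z Set.univ) :=
  ⟨hfil.pureCodimOneIn_preimage hf (isClosedSubposet_univ_iff.1 hZ),
    hfil.isFiltrationMap.pureCodimOneIn_of_preimage hf⟩
end

section
/- Let f : K → L be a full monotone map of finite posets such that the dual map f^op : K^op → L^op (the same function between the order duals) is a filtration map. Then f^op is a constructible map if and only if, for every σ ∈ L, the order dual (f⁻¹(σ))^op of the fiber f⁻¹(σ) is a constructible poset. -/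
/-- A subposet `Q` of `P` is full if for every `p ∈ P` the set `⌊p⌋ ∩ Q` is
empty or has a greatest element. -/
def IsFullSub {P : Type*} [PartialOrder P] (Q : Set P) : Prop :=
  ∀ p : P, {x | x ∈ Q ∧ x ≤ p} = ∅ ∨
    ∃ g ∈ Q, g ≤ p ∧ ∀ x ∈ Q, x ≤ p → x ≤ g

/-- The dual of a monotone map: the same function between the order duals. -/
def dualMap {P Q : Type*} [PartialOrder P] [PartialOrder Q] (f : P → Q) :
    Pᵒᵈ → Qᵒᵈ :=
  fun x => OrderDual.toDual (f (OrderDual.ofDual x))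

/-!
Read in `Kᵒᵈ`, the preimage `f^op⁻¹(⌊σ⌋) = {x | σ ≤ f x}` retracts onto the fiber
`f⁻¹(σ)`: the filtration property makes the fiber meet the cone of every such `x`, and
fullness then gives a greatest point of the fiber in that cone. So the fiber is an upper set
of the preimage, and each point of the preimage has a least point of the fiber above it.
Constructibility passes along such retractions in both directions, by induction on a
constructibility derivation: a decomposition `Q ∪ R` of the fiber pulls back along the
retraction, and a decomposition of the preimage restricts to the fiber, because codimension
one forces the maximal elements of each piece into the fiber.
-/

open OrderDual Set

section Retraction

variable {P : Type*} [PartialOrder P]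

lemma Maximal.isMaxIn {A : Set P} {a : P} (h : Maximal (· ∈ A) a) : IsMaxIn A a :=
  ⟨h.1, fun _ hx hax => le_antisymm (h.2 hx hax) hax⟩

lemma exists_le_isMaxIn [Finite P] {A : Set P} {p : P} (hp : p ∈ A) :
    ∃ m, p ≤ m ∧ IsMaxIn A m := by
  obtain ⟨m, hpm, hm⟩ := (toFinite A).exists_le_maximal hp
  exact ⟨m, hpm, hm.isMaxIn⟩

lemma CodimOneIn.not_isMaxIn {A B : Set P} (hc : CodimOneIn A B) (hAB : A ⊆ B) {a : P}
    (ha : a ∈ A) : ¬IsMaxIn B a := fun hmax => by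
  obtain ⟨b, -, hab⟩ := hc a ⟨ha, fun x hx => hmax.2 x (hAB hx)⟩
  exact hab.2.2.1.ne' (hmax.2 b hab.2.1 hab.2.2.1.le)

lemma IsClosedSubposet.inter {A B : Set P} (h : IsClosedSubposet B A) (F : Set P) :
    IsClosedSubposet (B ∩ F) (A ∩ F) :=
  ⟨inter_subset_inter_left F h.1, fun a ha x hx hxa => ⟨h.2 a ha.1 x hx.1 hxa, hx.2⟩⟩

lemma IsFullSub.exists_isGreatest {Q : Set P} (h : IsFullSub Q) {p : P}
    (hne : ∃ x ∈ Q, x ≤ p) : ∃ g, IsGreatest {x | x ∈ Q ∧ x ≤ p} g := by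
  obtain ⟨x, hxQ, hxp⟩ := hne
  rcases h p with hempty | ⟨g, hgQ, hgp, hgreatest⟩
  · exact absurd (hempty ▸ ⟨hxQ, hxp⟩ : x ∈ (∅ : Set P)) id
  · exact ⟨g, ⟨hgQ, hgp⟩, fun y hy => hgreatest y hy.1 hy.2⟩

lemma IsFiltrationMap.exists_le_eq [Finite P] {Q : Type*} [PartialOrder Q] {g : P → Q}
    (hg : IsFiltrationMap g) {p : P} {q : Q} (hp : g p ≤ q) : ∃ x, p ≤ x ∧ g x = q := by
  rcases hp.eq_or_lt with heq | hlt
  · exact ⟨p, le_rfl, heq⟩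
  obtain ⟨m, hpm, hm⟩ := exists_le_isMaxIn (A := g ⁻¹' {y | y < q}) hlt
  obtain ⟨b, -, hmb⟩ := hg q m hm
  refine ⟨b, hpm.trans hmb.2.2.1.le, (hmb.2.1 : g b ≤ q).eq_of_not_lt fun hbq => ?_⟩
  exact hmb.2.2.1.ne' (hm.2 b hbq hmb.2.2.1.le)

structure IsUpperRetraction (S F : Set P) (r : P → P) : Prop where
  subset : F ⊆ S
  upper : ∀ a ∈ F, ∀ x ∈ S, a ≤ x → x ∈ F
  isLeast : ∀ p ∈ S, IsLeast {x | x ∈ F ∧ p ≤ x} (r p)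

namespace IsUpperRetraction

variable {S F : Set P} {r : P → P}

lemma exists_of_isLeast (hFS : F ⊆ S) (hup : ∀ a ∈ F, ∀ x ∈ S, a ≤ x → x ∈ F)
    (hleast : ∀ p ∈ S, ∃ g, IsLeast {x | x ∈ F ∧ p ≤ x} g) :
    ∃ r, IsUpperRetraction S F r := by
  choose! r hr using hleast
  exact ⟨r, hFS, hup, hr⟩

variable (h : IsUpperRetraction S F r)
include h

lemma mem {p : P} (hp : p ∈ S) : r p ∈ F := (h.isLeast p hp).1.1

lemma le {p : P} (hp : p ∈ S) : p ≤ r p := (h.isLeast p hp).1.2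

lemma le_of_le {p x : P} (hp : p ∈ S) (hx : x ∈ F) (hpx : p ≤ x) : r p ≤ x :=
  (h.isLeast p hp).2 ⟨hx, hpx⟩

lemma apply_eq {x : P} (hx : x ∈ F) : r x = x :=
  le_antisymm (h.le_of_le (h.subset hx) hx le_rfl) (h.le (h.subset hx))

lemma apply_le_apply {p p' : P} (hp : p ∈ S) (hp' : p' ∈ S) (hpp' : p ≤ p') : r p ≤ r p' :=
  h.le_of_le hp (h.mem hp') (hpp'.trans (h.le hp'))

lemma preimage {T : Set P} (hT : T ⊆ F) : IsUpperRetraction (S ∩ r ⁻¹' T) T r where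
  subset x hx := ⟨h.subset (hT hx), show r x ∈ T from (h.apply_eq (hT hx)).symm ▸ hx⟩
  upper a ha x hx hax := h.apply_eq (h.upper a (hT ha) x hx.1 hax) ▸ hx.2
  isLeast _ hp := ⟨⟨hp.2, h.le hp.1⟩, fun _ hx => h.le_of_le hp.1 (hT hx.1) hx.2⟩

lemma isClosedSubposet_preimage {T : Set P} (hT : IsClosedSubposet F T) :
    IsClosedSubposet S (S ∩ r ⁻¹' T) :=
  ⟨inter_subset_left, fun a ha x hx hxa =>
    ⟨hx, hT.2 (r a) ha.2 (r x) (h.mem hx) (h.apply_le_apply hx ha.1 hxa)⟩⟩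

lemma codimOneIn_preimage {A B : Set P} (hAB : A ⊆ B) (hBF : B ⊆ F) (hc : CodimOneIn A B) :
    CodimOneIn (S ∩ r ⁻¹' A) (S ∩ r ⁻¹' B) := by
  have hA := h.preimage (hAB.trans hBF)
  have hB := h.preimage hBF
  intro a ha
  have hraA : r a ∈ A := ha.1.2
  have haA : a ∈ A := ha.2 (r a) (hA.subset hraA) (h.le ha.1.1) ▸ hraA
  obtain ⟨b, hbmax, hab⟩ := hc a ⟨haA, fun x hx => ha.2 x (hA.subset hx)⟩
  have hB_of_gt : ∀ x ∈ S ∩ r ⁻¹' B, a < x → x ∈ B := fun x hx hax =>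
    hB.upper a hab.1 x hx hax.le
  refine ⟨b, ⟨hB.subset hbmax.1, fun x hx hbx =>
      hbmax.2 x (hB_of_gt x hx (hab.2.2.1.trans_le hbx)) hbx⟩,
    hB.subset hab.1, hB.subset hab.2.1, hab.2.2.1,
    fun x hx hax => hab.2.2.2 x (hB_of_gt x hx hax) hax⟩

lemma constructible_of_target (hF : PosetConstructible F) : PosetConstructible S := by
  induction hF generalizing S with
  | @cone A g hg hgreatest =>
    exact .cone (h.subset hg) fun x hx => (h.le hx).trans (hgreatest _ (h.mem hx))
  | @step Q R hQ hR hcQ hcR _ _ _ ihQ ihR ihQR =>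
    have hS : S ∩ r ⁻¹' Q ∪ S ∩ r ⁻¹' R = S := by
      rw [← inter_union_distrib_left, ← preimage_union]
      exact inter_eq_left.2 fun p hp => h.mem hp
    have hI : S ∩ r ⁻¹' (Q ∩ R) = S ∩ r ⁻¹' Q ∩ (S ∩ r ⁻¹' R) := by
      rw [preimage_inter, inter_inter_distrib_left]
    rw [← hS]
    refine .step (by rw [hS]; exact h.isClosedSubposet_preimage hQ)
      (by rw [hS]; exact h.isClosedSubposet_preimage hR)
      (by rw [← hI]; exact h.codimOneIn_preimage inter_subset_left subset_union_left hcQ)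
      (by rw [← hI]; exact h.codimOneIn_preimage inter_subset_right subset_union_right hcR)
      (ihQ (h.preimage subset_union_left)) (ihR (h.preimage subset_union_right))
      (by rw [← hI]; exact ihQR (h.preimage (inter_subset_left.trans subset_union_left)))

lemma restrict [Finite P] {T : Set P} (hT : IsClosedSubposet S T)
    (hmax : ∀ m, IsMaxIn T m → m ∈ F) : IsUpperRetraction T (T ∩ F) r where
  subset := inter_subset_left
  upper a ha x hx hax := ⟨hx, h.upper a ha.2 x (hT.1 hx) hax⟩
  isLeast p hp := by
    have hpS := hT.1 hp
    obtain ⟨m, hpm, hm⟩ := exists_le_isMaxIn hp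
    have hrpT : r p ∈ T :=
      hT.2 m hm.1 (r p) (h.subset (h.mem hpS)) (h.le_of_le hpS (hmax m hm) hpm)
    exact ⟨⟨⟨hrpT, h.mem hpS⟩, h.le hpS⟩, fun x hx => h.le_of_le hpS hx.1.2 hx.2⟩

lemma inter {S' F' : Set P} (h' : IsUpperRetraction S' F' r) :
    IsUpperRetraction (S ∩ S') (F ∩ F') r where
  subset := inter_subset_inter h.subset h'.subset
  upper a ha x hx hax := ⟨h.upper a ha.1 x hx.1 hax, h'.upper a ha.2 x hx.2 hax⟩
  isLeast _ hp := ⟨⟨⟨h.mem hp.1, h'.mem hp.2⟩, h.le hp.1⟩,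
    fun _ hx => h.le_of_le hp.1 hx.1.1 hx.2⟩

lemma codimOneIn_inter {A B : Set P} (hAS : A ⊆ S) (hc : CodimOneIn A B)
    (hmax : ∀ m, IsMaxIn B m → m ∈ F) : CodimOneIn (A ∩ F) (B ∩ F) := by
  intro a ha
  obtain ⟨b, hbmax, hab⟩ := hc a ⟨ha.1.1, fun x hx hax =>
    ha.2 x ⟨hx, h.upper a ha.1.2 x (hAS hx) hax⟩ hax⟩
  have hbF := hmax b hbmax
  exact ⟨b, ⟨⟨hbmax.1, hbF⟩, fun x hx => hbmax.2 x hx.1⟩,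
    ⟨hab.1, ha.1.2⟩, ⟨hab.2.1, hbF⟩, hab.2.2.1, fun x hx => hab.2.2.2 x hx.1⟩

lemma mem_of_isMaxIn {Q R : Set P} (hQS : Q ⊆ S) (hR : IsClosedSubposet S R)
    (hSQR : S ⊆ Q ∪ R) (hc : CodimOneIn (Q ∩ R) Q) {m : P} (hm : IsMaxIn Q m) : m ∈ F := by
  have hmS : m ∈ S := hQS hm.1
  rcases hSQR (h.subset (h.mem hmS)) with hQ | hR'
  · exact hm.2 (r m) hQ (h.le hmS) ▸ h.mem hmS
  · exact absurd hm (hc.not_isMaxIn inter_subset_left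
      ⟨hm.1, hR.2 (r m) hR' m hmS (h.le hmS)⟩)

lemma constructible_of_source [Finite P] (hS : PosetConstructible S) : PosetConstructible F := by
  induction hS generalizing F with
  | @cone A g hg hgreatest =>
    have hrg : r g = g := le_antisymm (hgreatest _ (h.subset (h.mem hg))) (h.le hg)
    exact .cone (hrg ▸ h.mem hg) fun x hx => hgreatest x (h.subset hx)
  | @step Q R hQ hR hcQ hcR _ _ _ ihQ ihR ihQR =>
    have hmaxQ : ∀ m, IsMaxIn Q m → m ∈ F := fun _ =>
      h.mem_of_isMaxIn subset_union_left hR subset_rfl hcQ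
    have hmaxR : ∀ m, IsMaxIn R m → m ∈ F := fun _ =>
      h.mem_of_isMaxIn subset_union_right hQ (union_comm Q R).subset (inter_comm Q R ▸ hcR)
    have hQF := h.restrict hQ hmaxQ
    have hRF := h.restrict hR hmaxR
    have hQR : Q ∩ R ⊆ Q ∪ R := inter_subset_left.trans subset_union_left
    have hI : (Q ∩ R) ∩ F = (Q ∩ F) ∩ (R ∩ F) := inter_inter_distrib_right Q R F
    rw [← inter_eq_right.2 h.subset, union_inter_distrib_right]
    refine .step (union_inter_distrib_right Q R F ▸ hQ.inter F)
      (union_inter_distrib_right Q R F ▸ hR.inter F)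
      (hI ▸ h.codimOneIn_inter hQR hcQ hmaxQ) (hI ▸ h.codimOneIn_inter hQR hcR hmaxR)
      (ihQ hQF) (ihR hRF) (ihQR (hQF.inter hRF))

lemma constructible_iff [Finite P] : PosetConstructible S ↔ PosetConstructible F :=
  ⟨h.constructible_of_source, h.constructible_of_target⟩

end IsUpperRetraction

end Retraction

lemma exists_isUpperRetraction_dual_fiber {K L : Type*} [PartialOrder K] [PartialOrder L]
    [Finite K] {f : K → L} (hf : Monotone f) {σ : L} (hfull : IsFullSub (f ⁻¹' {σ}))
    (hfil : IsFiltrationMap (dualMap f)) :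
    ∃ r, IsUpperRetraction (dualMap f ⁻¹' {y | y ≤ toDual σ})
      (ofDual ⁻¹' (f ⁻¹' {σ}) : Set Kᵒᵈ) r := by
  refine IsUpperRetraction.exists_of_isLeast (fun x hx => hx.ge)
    (fun a ha x hx hax => (hf hax).trans_eq ha |>.antisymm hx) fun p hp => ?_
  obtain ⟨x, hpx, hx⟩ := hfil.exists_le_eq hp
  obtain ⟨g, hg⟩ := hfull.exists_isGreatest (p := ofDual p) ⟨ofDual x, hx, hpx⟩
  exact ⟨toDual g, hg.dual⟩

theorem dual_constructible_iff_fibers_general {K L : Type*} [PartialOrder K] [PartialOrder L]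
    [Finite K] (f : K → L) (hf : Monotone f)
    (hfull : ∀ σ : L, IsFullSub (f ⁻¹' {σ}))
    (hfil : IsFiltrationMap (dualMap f)) :
    IsConstructibleMap (dualMap f) ↔
      ∀ σ : L, PosetConstructible (OrderDual.ofDual ⁻¹' (f ⁻¹' {σ}) : Set Kᵒᵈ) := by
  constructor
  · rintro ⟨-, hcone⟩ σ
    obtain ⟨r, hr⟩ := exists_isUpperRetraction_dual_fiber hf (hfull σ) hfil
    exact hr.constructible_iff.1 (hcone (toDual σ))
  · refine fun hfib => ⟨hfil, fun q => ?_⟩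
    obtain ⟨r, hr⟩ := exists_isUpperRetraction_dual_fiber hf (hfull (ofDual q)) hfil
    exact hr.constructible_iff.2 (hfib (ofDual q))

/-- Let `f : K → L` be a full monotone map of finite posets whose dual `f^op` is a
filtration map.  Then `f^op` is a constructible map iff the order dual of every fiber
`f⁻¹(σ)` is a constructible poset. -/
theorem dual_constructible_iff_fibers {K L : Type*} [PartialOrder K] [PartialOrder L]
    [Finite K] [Finite L] (f : K → L) (hf : Monotone f)
    (hfull : ∀ σ : L, IsFullSub (f ⁻¹' {σ}))
    (hfil : IsFiltrationMap (dualMap f)) :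
    IsConstructibleMap (dualMap f) ↔
      ∀ σ : L, PosetConstructible (OrderDual.ofDual ⁻¹' (f ⁻¹' {σ}) : Set Kᵒᵈ) :=
  dual_constructible_iff_fibers_general f hf hfull hfil
end
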